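/- arXiv:2403.05520 — 2 statements merged into one kernel-verified Lean document; each statement's English description precedes it below -/
import Mathlib

section
/- Let X be a real Banach space, σ ∈ ℝ, λ ∈ ℝ, B, f : X → X arbitrary maps, h : [σ,∞) → X a function, and a : X → ℝ continuous with a(x) ≥ m > 0 for all x ∈ X. Suppose w : [σ,∞) → X is continuous and, for every τ > σ, differentiable at τ with w′(τ) = a(w(τ)) • B(w(τ)) + λ • f(w(τ)) + h(τ). Define θ(τ) = σ + ∫_σ^τ a(w(r)) dr. Then θ is a strictly increasing continuous bijection of [σ,∞) onto itself, the function u := w ∘ θ⁻¹ is differentiable at every t > σ with u′(t) = B(u(t)) + (a(u(t)))⁻¹ • (λ • f(u(t)) + h(θ⁻¹(t))), and moreover θ⁻¹(t) = σ + ∫_σ^t (a(u(r)))⁻¹ dr; i.e., u solves the time-reparameterized semilinear equation u′(t) = B(u(t)) + [λ f(u(t)) + h(α(t))]/a(u(t)) with α(t) = σ + ∫_σ^t a(u(r))⁻¹ dr. -/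
/-!
The time change `θ` has derivative `a (w τ) ≥ m > 0`. Freezing the integrand at its value at `σ` to the
left of `σ` extends `θ` to an increasing bijection of `ℝ` fixing `σ`, whose inverse is
differentiable with derivative `1 / a (w (θ⁻¹ t))`. The chain rule then turns the quasilinear
equation for `w` into the semilinear one for `w ∘ θ⁻¹`, and the fundamental theorem of calculus
for `θ⁻¹` gives its integral formula.
-/

open Set MeasureTheory intervalIntegral Filter Function

theorem surjective_of_mul_sub_le {f : ℝ → ℝ} {m : ℝ} (hm : 0 < m) (hf : Continuous f)
    (hfm : ∀ ⦃x y⦄, x ≤ y → m * (y - x) ≤ f y - f x) : Surjective f := by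
  refine hf.surjective ?_ ?_
  · refine tendsto_atTop_mono' atTop ?_
      (tendsto_atTop_add_const_left _ (f 0) (tendsto_id.const_mul_atTop hm))
    filter_upwards [eventually_ge_atTop 0] with y hy
    simp only [id]
    linarith [hfm hy]
  · refine tendsto_atBot_mono' atBot ?_
      (tendsto_atBot_add_const_left _ (f 0) (tendsto_id.const_mul_atBot hm))
    filter_upwards [eventually_le_atBot 0] with y hy
    simp only [id]
    linarith [hfm hy]

theorem OrderIso.hasDerivAt_symm (e : ℝ ≃o ℝ) {y f' : ℝ} (he : HasDerivAt e f' (e.symm y))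
    (hf' : f' ≠ 0) : HasDerivAt e.symm f'⁻¹ y :=
  he.of_local_left_inverse e.symm.continuous.continuousAt hf' (.of_forall e.apply_symm_apply)

theorem OrderIso.bijOn_Ici {α : Type*} [Preorder α] (e : α ≃o α) {a : α} (ha : e a = a) :
    BijOn e (Ici a) (Ici a) := by
  simpa [ha] using e.injective.injOn.bijOn_image (s := Ici a)

theorem OrderIso.mapsTo_symm_Ici {α : Type*} [Preorder α] (e : α ≃o α) {a : α} (ha : e a = a) :
    MapsTo e.symm (Ici a) (Ici a) := fun x hx => by
  simpa [e.le_symm_apply, ha] using hx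

section TimeChange

variable {σ m : ℝ} {g : ℝ → ℝ}

/-- `σ + ∫_σ^t g`, with `g` frozen at `g σ` to the left of `σ`, so that it is differentiable on
all of `ℝ` whatever `g` does below `σ`. -/
noncomputable def timeChange (σ : ℝ) (g : ℝ → ℝ) (t : ℝ) : ℝ := σ + ∫ r in σ..t, g (max σ r)

theorem timeChange_self : timeChange σ g σ = σ := by simp [timeChange]

theorem timeChange_of_le {t : ℝ} (ht : σ ≤ t) : timeChange σ g t = σ + ∫ r in σ..t, g r := by
  refine congrArg (σ + ·) (integral_congr fun r hr => ?_)
  rw [uIcc_of_le ht] at hr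
  simp [max_eq_right hr.1]

theorem ContinuousOn.continuous_comp_max (hg : ContinuousOn g (Ici σ)) :
    Continuous fun r => g (max σ r) :=
  hg.comp_continuous (continuous_const.max continuous_id) fun r => le_max_left σ r

theorem hasDerivAt_timeChange (hg : ContinuousOn g (Ici σ)) (t : ℝ) :
    HasDerivAt (timeChange σ g) (g (max σ t)) t :=
  (hg.continuous_comp_max.integral_hasStrictDerivAt σ t).hasDerivAt.const_add σ

theorem mul_sub_le_timeChange_sub (hg : ContinuousOn g (Ici σ)) (hgm : ∀ r ≥ σ, m ≤ g r)
    ⦃x y : ℝ⦄ (hxy : x ≤ y) : m * (y - x) ≤ timeChange σ g y - timeChange σ g x :=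
  mul_sub_le_image_sub_of_le_deriv (fun t => (hasDerivAt_timeChange hg t).differentiableAt)
    (fun t => (hasDerivAt_timeChange hg t).deriv ▸ hgm _ (le_max_left σ t)) hxy

noncomputable def timeChangeIso (hm : 0 < m) (hg : ContinuousOn g (Ici σ))
    (hgm : ∀ r ≥ σ, m ≤ g r) : ℝ ≃o ℝ :=
  StrictMono.orderIsoOfSurjective (timeChange σ g)
    (fun _ _ hxy => sub_pos.1 <| (mul_pos hm (sub_pos.2 hxy)).trans_le <|
      mul_sub_le_timeChange_sub hg hgm hxy.le)
    (surjective_of_mul_sub_le hm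
      (continuous_iff_continuousAt.2 fun t => (hasDerivAt_timeChange hg t).continuousAt)
      (mul_sub_le_timeChange_sub hg hgm))

variable (hm : 0 < m) (hg : ContinuousOn g (Ici σ)) (hgm : ∀ r ≥ σ, m ≤ g r)

@[simp]
theorem timeChangeIso_apply (t : ℝ) : timeChangeIso hm hg hgm t = timeChange σ g t := rfl

theorem timeChangeIso_self : timeChangeIso hm hg hgm σ = σ := timeChange_self

theorem timeChangeIso_symm_self : (timeChangeIso hm hg hgm).symm σ = σ :=
  (timeChangeIso hm hg hgm).symm_apply_eq.2 (timeChangeIso_self hm hg hgm).symm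

theorem max_timeChangeIso_symm {t : ℝ} (ht : σ ≤ t) :
    max σ ((timeChangeIso hm hg hgm).symm t) = (timeChangeIso hm hg hgm).symm t :=
  max_eq_right ((timeChangeIso hm hg hgm).mapsTo_symm_Ici (timeChangeIso_self hm hg hgm) ht)

theorem hasDerivAt_timeChangeIso_symm (t : ℝ) :
    HasDerivAt (timeChangeIso hm hg hgm).symm
      (g (max σ ((timeChangeIso hm hg hgm).symm t)))⁻¹ t :=
  OrderIso.hasDerivAt_symm _ (hasDerivAt_timeChange hg _)
    (hm.trans_le (hgm _ (le_max_left _ _))).ne'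

theorem hasDerivAt_timeChangeIso_symm_of_le ⦃t : ℝ⦄ (ht : σ ≤ t) :
    HasDerivAt (timeChangeIso hm hg hgm).symm (g ((timeChangeIso hm hg hgm).symm t))⁻¹ t := by
  simpa only [max_timeChangeIso_symm hm hg hgm ht] using hasDerivAt_timeChangeIso_symm hm hg hgm t

theorem timeChangeIso_symm_eq_integral ⦃t : ℝ⦄ (ht : σ ≤ t) :
    (timeChangeIso hm hg hgm).symm t =
      σ + ∫ r in σ..t, (g ((timeChangeIso hm hg hgm).symm r))⁻¹ := by
  have hint : IntervalIntegrable
      (fun r => (g (max σ ((timeChangeIso hm hg hgm).symm r)))⁻¹) volume σ t :=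
    ((hg.continuous_comp_max.comp (timeChangeIso hm hg hgm).symm.continuous).inv₀ fun r =>
      (hm.trans_le (hgm _ (le_max_left _ _))).ne').intervalIntegrable σ t
  have hftc := integral_eq_sub_of_hasDerivAt
    (fun r _ => hasDerivAt_timeChangeIso_symm hm hg hgm r) hint
  rw [← integral_congr fun r hr => ?_, hftc, timeChangeIso_symm_self, add_sub_cancel]
  rw [uIcc_of_le ht] at hr
  rw [max_timeChangeIso_symm hm hg hgm hr.1]

end TimeChange

theorem stmt3_general {X : Type*} [NormedAddCommGroup X] [NormedSpace ℝ X]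
    (σ lam m : ℝ) (hm : 0 < m)
    (B f : X → X) (h : ℝ → X)
    (a : X → ℝ) (ha : Continuous a) (ham : ∀ x, m ≤ a x)
    (w : ℝ → X) (hw : ContinuousOn w (Ici σ))
    (hde : ∀ τ > σ, HasDerivAt w (a (w τ) • B (w τ) + lam • f (w τ) + h τ) τ)
    (θ : ℝ → ℝ) (hθ : ∀ τ, θ τ = σ + ∫ r in σ..τ, a (w r)) :
    StrictMonoOn θ (Ici σ) ∧ ContinuousOn θ (Ici σ) ∧ BijOn θ (Ici σ) (Ici σ) ∧
    ∃ θinv : ℝ → ℝ, MapsTo θinv (Ici σ) (Ici σ) ∧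
      (∀ τ ≥ σ, θinv (θ τ) = τ) ∧ (∀ t ≥ σ, θ (θinv t) = t) ∧
      (∀ t > σ, HasDerivAt (w ∘ θinv)
        (B ((w ∘ θinv) t) + (a ((w ∘ θinv) t))⁻¹ • (lam • f ((w ∘ θinv) t) + h (θinv t))) t) ∧
      (∀ t ≥ σ, θinv t = σ + ∫ r in σ..t, (a ((w ∘ θinv) r))⁻¹) := by
  have hg : ContinuousOn (fun r => a (w r)) (Ici σ) := ha.comp_continuousOn hw
  have hgm : ∀ r ≥ σ, m ≤ a (w r) := fun r _ => ham (w r)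
  have hθe : EqOn θ (timeChangeIso hm hg hgm) (Ici σ) := fun τ hτ => by
    rw [hθ, timeChangeIso_apply, timeChange_of_le hτ]
  have hderiv := hasDerivAt_timeChangeIso_symm_of_le hm hg hgm
  have hintegral := timeChangeIso_symm_eq_integral hm hg hgm
  have he := timeChangeIso_self hm hg hgm
  generalize timeChangeIso hm hg hgm = e at *
  have hsymm : MapsTo e.symm (Ici σ) (Ici σ) := e.mapsTo_symm_Ici he
  refine ⟨(e.strictMono.strictMonoOn _).congr hθe.symm, e.continuous.continuousOn.congr hθe,
    (e.bijOn_Ici he).congr hθe.symm, e.symm, hsymm,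
    fun τ hτ => by rw [hθe hτ, e.symm_apply_apply],
    fun t ht => by rw [hθe (hsymm ht), e.apply_symm_apply],
    fun t ht => ?_, hintegral⟩
  have hτ : σ < e.symm t := e.lt_symm_apply.2 (by rwa [he])
  convert (hde _ hτ).scomp t (hderiv ht.le) using 1
  simp [smul_add, smul_smul, inv_mul_cancel₀ (hm.trans_le (ham _)).ne', add_assoc]

/-- From the quasilinear equation `w' = a(w) • B(w) + λ • f(w) + h(τ)` to the semilinear one:
the reparameterization `θ τ = σ + ∫_σ^τ a(w(r)) dr` is a strictly increasing continuous bijection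
of `[σ,∞)` onto itself, `u := w ∘ θ⁻¹` solves
`u' = B(u) + a(u)⁻¹ • (λ • f(u) + h(θ⁻¹ t))`, and `θ⁻¹ t = σ + ∫_σ^t a(u(r))⁻¹ dr`. -/
theorem stmt3 {X : Type*} [NormedAddCommGroup X] [NormedSpace ℝ X] [CompleteSpace X]
    (σ lam m : ℝ) (hm : 0 < m)
    (B f : X → X) (h : ℝ → X)
    (a : X → ℝ) (ha : Continuous a) (ham : ∀ x, m ≤ a x)
    (w : ℝ → X) (hw : ContinuousOn w (Ici σ))
    (hde : ∀ τ > σ, HasDerivAt w (a (w τ) • B (w τ) + lam • f (w τ) + h τ) τ)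
    (θ : ℝ → ℝ) (hθ : ∀ τ, θ τ = σ + ∫ r in σ..τ, a (w r)) :
    StrictMonoOn θ (Ici σ) ∧ ContinuousOn θ (Ici σ) ∧ BijOn θ (Ici σ) (Ici σ) ∧
    ∃ θinv : ℝ → ℝ, MapsTo θinv (Ici σ) (Ici σ) ∧
      (∀ τ ≥ σ, θinv (θ τ) = τ) ∧ (∀ t ≥ σ, θ (θinv t) = t) ∧
      (∀ t > σ, HasDerivAt (w ∘ θinv)
        (B ((w ∘ θinv) t) + (a ((w ∘ θinv) t))⁻¹ • (lam • f ((w ∘ θinv) t) + h (θinv t))) t) ∧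
      (∀ t ≥ σ, θinv t = σ + ∫ r in σ..t, (a ((w ∘ θinv) r))⁻¹) :=
  stmt3_general σ lam m hm B f h a ha ham w hw hde θ hθ
end

section
/- Let X be a real Banach space, σ ∈ ℝ, λ ∈ ℝ, B, f : X → X arbitrary maps, h : [σ,∞) → X a function, and a : X → ℝ continuous with 0 < m ≤ a(x) ≤ M for all x ∈ X. Suppose u : [σ,∞) → X is continuous and, for every t > σ, differentiable at t with u′(t) = B(u(t)) + (a(u(t)))⁻¹ • (λ • f(u(t)) + h(α(t))), where α(t) = σ + ∫_σ^t (a(u(r)))⁻¹ dr. Then α is a strictly increasing continuous bijection of [σ,∞) onto itself, and the function w := u ∘ α⁻¹ is differentiable at every τ > σ with w′(τ) = a(w(τ)) • B(w(τ)) + λ • f(w(τ)) + h(τ). -/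
/-! The clock `α` has derivative `(a ∘ u)⁻¹ ≥ M⁻¹` on `(σ, ∞)` and `α σ = σ`, so it grows at least
linearly and is a strictly increasing continuous bijection of `[σ, ∞)`. Its inverse is monotone
with an interval as image, hence continuous, and the inverse function rule gives
`(α⁻¹)'(τ) = a (u t)` for `t = α⁻¹ τ`. By the chain rule `w'(τ) = a (u t) • u'(t)`, and this
factor cancels the `a(u)⁻¹` in front of `λ • f (u t) + h (α t) = λ • f (w τ) + h τ`. -/

open Set MeasureTheory intervalIntegral Filter Topology Function

section Primitive

variable {E : Type*} [NormedAddCommGroup E] [NormedSpace ℝ E] {g : ℝ → E} {σ : ℝ}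

theorem continuousOn_primitive_Ici (hg : ContinuousOn g (Ici σ)) :
    ContinuousOn (fun t => ∫ r in σ..t, g r) (Ici σ) := by
  intro t ht
  have hIcc : ContinuousOn (fun t => ∫ r in σ..t, g r) (Icc σ (t + 1)) := by
    have hle : σ ≤ t + 1 := by linarith [mem_Ici.mp ht]
    simpa only [uIcc_of_le hle] using continuousOn_primitive_interval' (b₁ := σ) (b₂ := t + 1)
      ((hg.mono Icc_subset_Ici_self).intervalIntegrable_of_Icc hle) left_mem_uIcc
  refine (hIcc t ⟨ht, by linarith⟩).mono_of_mem_nhdsWithin ?_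
  rw [← Ici_inter_Iic]
  exact inter_mem_nhdsWithin _ (Iic_mem_nhds (lt_add_one t))

theorem hasDerivAt_primitive_of_continuousOn_Ici [CompleteSpace E]
    (hg : ContinuousOn g (Ici σ)) {t : ℝ} (ht : σ < t) : HasDerivAt (fun t => ∫ r in σ..t, g r) (g t) t :=
  integral_hasDerivAt_right ((hg.mono Icc_subset_Ici_self).intervalIntegrable_of_Icc ht.le)
    ((hg.mono Ioi_subset_Ici_self).stronglyMeasurableAtFilter isOpen_Ioi t ht)
    (hg.continuousAt (Ici_mem_nhds ht))

end Primitive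

section TimeChange

variable {φ φ' : ℝ → ℝ} {σ c : ℝ}

theorem strictMonoOn_bijOn_Ici_of_le_deriv (hc : 0 < c) (hφσ : φ σ = σ)
    (hφ : ContinuousOn φ (Ici σ)) (hφ' : ∀ t > σ, HasDerivAt φ (φ' t) t)
    (hle : ∀ t > σ, c ≤ φ' t) :
    StrictMonoOn φ (Ici σ) ∧ BijOn φ (Ici σ) (Ici σ) := by
  have hgrowth : ∀ s ∈ Ici σ, ∀ t ∈ Ici σ, s ≤ t → c * (t - s) ≤ φ t - φ s := by
    refine (convex_Ici σ).mul_sub_le_image_sub_of_le_deriv hφ ?_ ?_ <;>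
      simp only [interior_Ici]
    · exact fun t ht => (hφ' t ht).differentiableAt.differentiableWithinAt
    · exact fun t ht => (hφ' t ht).deriv ▸ hle t ht
  have hmono : StrictMonoOn φ (Ici σ) := fun s hs t ht hst => by
    nlinarith [hgrowth s hs t ht hst.le]
  have hmaps : MapsTo φ (Ici σ) (Ici σ) := fun t ht => by
    have := hgrowth σ self_mem_Ici t ht ht
    rw [mem_Ici] at ht ⊢
    nlinarith
  have htop : Tendsto φ atTop atTop := by
    refine tendsto_atTop_mono' _ ?_ (tendsto_atTop_add_const_left _ (φ σ - c * σ)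
      (tendsto_id.const_mul_atTop hc))
    filter_upwards [Ici_mem_atTop σ] with t ht
    rw [id]
    linarith [hgrowth σ self_mem_Ici t ht ht]
  refine ⟨hmono, hmaps, hmono.injOn, fun τ hτ => ?_⟩
  exact intermediate_value_Ici hφ htop (by rwa [hφσ])

end TimeChange

theorem StrictMonoOn.monotoneOn_invFunOn {α β : Type*} [LinearOrder α] [Nonempty α] [Preorder β]
    {f : α → β} {s : Set α} {t : Set β} (hf : StrictMonoOn f s) (hst : SurjOn f s t) :
    MonotoneOn (invFunOn f s) t := by
  intro p hp q hq hpq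
  by_contra! hlt
  have := hf (hst.mapsTo_invFunOn hq) (hst.mapsTo_invFunOn hp) hlt
  rw [hst.rightInvOn_invFunOn hp, hst.rightInvOn_invFunOn hq] at this
  exact lt_irrefl _ (this.trans_le hpq)

theorem HasDerivAt.invFunOn_of_strictMonoOn {φ : ℝ → ℝ} {s t : Set ℝ} {τ φ' : ℝ}
    (hmono : StrictMonoOn φ s) (hbij : BijOn φ s t) (hs : s ∈ 𝓝 (invFunOn φ s τ))
    (ht : t ∈ 𝓝 τ) (hφ : HasDerivAt φ φ' (invFunOn φ s τ)) (hφ' : φ' ≠ 0) :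
    HasDerivAt (invFunOn φ s) φ'⁻¹ τ := by
  have hcont : ContinuousAt (invFunOn φ s) τ := by
    refine continuousAt_of_monotoneOn_of_image_mem_nhds
      (hmono.monotoneOn_invFunOn hbij.surjOn) ht ?_
    rwa [(hbij.invOn_invFunOn.symm.bijOn hbij.surjOn.mapsTo_invFunOn hbij.mapsTo).image_eq]
  exact hφ.of_local_left_inverse hcont hφ' (eventually_of_mem ht hbij.surjOn.rightInvOn_invFunOn)

theorem stmt4_general {X : Type*} [NormedAddCommGroup X] [NormedSpace ℝ X]
    (σ lam m M : ℝ) (hm : 0 < m)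
    (B f : X → X) (h : ℝ → X)
    (a : X → ℝ) (ha : Continuous a) (ham : ∀ x, m ≤ a x) (haM : ∀ x, a x ≤ M)
    (u : ℝ → X) (hu : ContinuousOn u (Ici σ))
    (α : ℝ → ℝ) (hα : ∀ t, α t = σ + ∫ r in σ..t, (a (u r))⁻¹)
    (hde : ∀ t > σ, HasDerivAt u (B (u t) + (a (u t))⁻¹ • (lam • f (u t) + h (α t))) t) :
    StrictMonoOn α (Ici σ) ∧ ContinuousOn α (Ici σ) ∧ BijOn α (Ici σ) (Ici σ) ∧
    ∃ αinv : ℝ → ℝ, MapsTo αinv (Ici σ) (Ici σ) ∧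
      (∀ t ≥ σ, αinv (α t) = t) ∧ (∀ τ ≥ σ, α (αinv τ) = τ) ∧
      ∀ τ > σ, HasDerivAt (u ∘ αinv)
        (a ((u ∘ αinv) τ) • B ((u ∘ αinv) τ) + lam • f ((u ∘ αinv) τ) + h τ) τ := by
  have hapos : ∀ x, 0 < a x := fun x => hm.trans_le (ham x)
  have hg : ContinuousOn (fun r => (a (u r))⁻¹) (Ici σ) :=
    (ha.comp_continuousOn hu).inv₀ fun r _ => (hapos (u r)).ne'
  have hαdef : α = fun t => σ + ∫ r in σ..t, (a (u r))⁻¹ := funext hα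
  have hαcont : ContinuousOn α (Ici σ) :=
    hαdef ▸ continuousOn_const.add (continuousOn_primitive_Ici hg)
  have hαderiv : ∀ t > σ, HasDerivAt α (a (u t))⁻¹ t := fun t ht =>
    hαdef ▸ (hasDerivAt_primitive_of_continuousOn_Ici hg ht).const_add σ
  have hασ : α σ = σ := by simp [hα]
  obtain ⟨hmono, hbij⟩ := strictMonoOn_bijOn_Ici_of_le_deriv
    (inv_pos.mpr ((hapos 0).trans_le (haM 0))) hασ hαcont hαderiv
    fun t _ => inv_anti₀ (hapos (u t)) (haM (u t))
  refine ⟨hmono, hαcont, hbij, invFunOn α (Ici σ), hbij.surjOn.mapsTo_invFunOn,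
    fun t ht => hbij.injOn.leftInvOn_invFunOn ht,
    fun τ hτ => hbij.surjOn.rightInvOn_invFunOn hτ, fun τ hτ => ?_⟩
  set t := invFunOn α (Ici σ) τ
  have hατ : α t = τ := hbij.surjOn.rightInvOn_invFunOn hτ.le
  have ht : σ < t := by
    refine (hbij.surjOn.mapsTo_invFunOn hτ.le).lt_of_ne fun hσt => hτ.ne ?_
    rw [← hατ, ← hσt, hασ]
  have hinv := (hαderiv t ht).invFunOn_of_strictMonoOn hmono hbij (Ici_mem_nhds ht)
    (Ici_mem_nhds hτ) (inv_ne_zero (hapos (u t)).ne')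
  rw [inv_inv] at hinv
  convert (hde t ht).scomp τ hinv using 1
  rw [comp_apply, hατ, smul_add, smul_inv_smul₀ (hapos (u t)).ne', add_assoc]

/-- From the semilinear equation `u' = B(u) + a(u)⁻¹ • (λ • f(u) + h(α t))`, with
`α t = σ + ∫_σ^t a(u(r))⁻¹ dr`, back to the quasilinear one: `α` is a strictly increasing
continuous bijection of `[σ,∞)` onto itself and `w := u ∘ α⁻¹` solves
`w' = a(w) • B(w) + λ • f(w) + h(τ)`. -/
theorem stmt4 {X : Type*} [NormedAddCommGroup X] [NormedSpace ℝ X] [CompleteSpace X]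
    (σ lam m M : ℝ) (hm : 0 < m) (hmM : m ≤ M)
    (B f : X → X) (h : ℝ → X)
    (a : X → ℝ) (ha : Continuous a) (ham : ∀ x, m ≤ a x) (haM : ∀ x, a x ≤ M)
    (u : ℝ → X) (hu : ContinuousOn u (Ici σ))
    (α : ℝ → ℝ) (hα : ∀ t, α t = σ + ∫ r in σ..t, (a (u r))⁻¹)
    (hde : ∀ t > σ, HasDerivAt u (B (u t) + (a (u t))⁻¹ • (lam • f (u t) + h (α t))) t) :
    StrictMonoOn α (Ici σ) ∧ ContinuousOn α (Ici σ) ∧ BijOn α (Ici σ) (Ici σ) ∧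
    ∃ αinv : ℝ → ℝ, MapsTo αinv (Ici σ) (Ici σ) ∧
      (∀ t ≥ σ, αinv (α t) = t) ∧ (∀ τ ≥ σ, α (αinv τ) = τ) ∧
      ∀ τ > σ, HasDerivAt (u ∘ αinv)
        (a ((u ∘ αinv) τ) • B ((u ∘ αinv) τ) + lam • f ((u ∘ αinv) τ) + h τ) τ :=
  stmt4_general σ lam m M hm B f h a ha ham haM u hu α hα hde
end
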